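/- arXiv:1803.05197 — 5 statements merged into one kernel-verified Lean document; each statement's English description precedes it below -/
import Mathlib

section
/- If the generator voltage magnitude is fixed at |V_g| = v > 0, then the power-flow solution satisfies W_P(Q_n) ≥ 0, and the net real power is one of the two roots P_n = (R·v² + √(k_ZV·W_P(Q_n)))/|Z|² or P_n = (R·v² − √(k_ZV·W_P(Q_n)))/|Z|². -/
/-!
Since `conj I = (conj V_g - V_t) / conj Z`, the injected power satisfies
`S_n · conj Z = v² - V_t V_g`, so `S_n` lies on the circle `|v² - S_n · conj Z| = V_t v`.
Writing this circle in the coordinates `P_n, Q_n` gives a quadratic in `P_n` whose completed square is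
`(|Z|² P_n - R v²)² = k_ZV · W_P(Q_n)`; both claims follow.
-/

open Complex ComplexConjugate

theorem mul_conj_div_mul_conj (V W Z : ℂ) (hZ : Z ≠ 0) :
    V * conj ((V - W) / Z) * conj Z = normSq V - V * conj W := by
  have : conj Z ≠ 0 := (map_ne_zero _).mpr hZ
  rw [map_div₀, map_sub, mul_div_assoc', div_mul_cancel₀ _ this, mul_sub, mul_conj]

theorem normSq_normSq_sub_mul_conj (V W Z : ℂ) (hZ : Z ≠ 0) :
    normSq (normSq V - V * conj ((V - W) / Z) * conj Z) = normSq V * normSq W := by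
  rw [mul_conj_div_mul_conj V W Z hZ, sub_sub_cancel, map_mul, normSq_conj]

theorem sq_normSq_mul_re_sub (S Z : ℂ) (c : ℝ) :
    (normSq Z * S.re - Z.re * c) ^ 2 = Z.re ^ 2 * c ^ 2 -
      normSq Z * (c ^ 2 - 2 * c * S.im * Z.im + normSq Z * S.im ^ 2 - normSq (c - S * conj Z)) := by
  simp only [normSq_apply, sub_re, sub_im, mul_re, mul_im, conj_re, conj_im, ofReal_re, ofReal_im]
  ring

theorem eq_div_add_sqrt_or_eq_div_sub_sqrt {a b x D : ℝ} (ha : a ≠ 0) (h : (a * x - b) ^ 2 = D) :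
    x = (b + √D) / a ∨ x = (b - √D) / a := by
  rw [← h, Real.sqrt_sq_eq_abs]
  rcases abs_cases (a * x - b) with ⟨habs, -⟩ | ⟨habs, -⟩
  · left; rw [habs]; field_simp; ring
  · right; rw [habs]; field_simp; ring

theorem net_real_power_roots_general
    (R X Vt v : ℝ) (hR : 0 < R) (hv : 0 < v)
    (Vg : ℂ) (hVg : ‖Vg‖ = v) :
    let Z : ℂ := ⟨R, X⟩
    let Icur : ℂ := (Vg - (Vt : ℂ)) / Z
    let Sn : ℂ := Vg * (starRingEnd ℂ) Icur
    let Pn : ℝ := Sn.re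
    let Qn : ℝ := Sn.im
    let Zm : ℝ := ‖Z‖
    let WP : ℝ → ℝ := fun Q =>
      R ^ 2 / Zm ^ 4 - Q ^ 2 / v ^ 4 - (v ^ 2 - Vt ^ 2 - 2 * Q * X) / (Zm ^ 2 * v ^ 2)
    let kZV : ℝ := Zm ^ 4 * v ^ 4
    0 ≤ WP Qn ∧
      (Pn = (R * v ^ 2 + Real.sqrt (kZV * WP Qn)) / Zm ^ 2 ∨
       Pn = (R * v ^ 2 - Real.sqrt (kZV * WP Qn)) / Zm ^ 2) := by
  intro Z Icur Sn Pn Qn Zm WP kZV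
  have hZ : Z ≠ 0 := fun h => hR.ne' (congrArg re h)
  have hZm : 0 < Zm := norm_pos_iff.mpr hZ
  have hVg2 : normSq Vg = v ^ 2 := by rw [← Complex.sq_norm, hVg]
  have hcircle : normSq (((v ^ 2 : ℝ) : ℂ) - Sn * conj Z) = v ^ 2 * Vt ^ 2 := by
    have h := normSq_normSq_sub_mul_conj Vg Vt Z hZ
    rwa [hVg2, normSq_ofReal, ← sq] at h
  have hdisc : kZV * WP Qn = (Zm ^ 2 * Pn - R * v ^ 2) ^ 2 := by
    rw [Complex.sq_norm, sq_normSq_mul_re_sub Sn Z (v ^ 2), hcircle, ← Complex.sq_norm]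
    simp only [kZV, WP, Z]
    field_simp
    ring
  have hkZV : 0 < kZV := by positivity
  refine ⟨nonneg_of_mul_nonneg_right (hdisc ▸ sq_nonneg _) hkZV, ?_⟩
  exact eq_div_add_sqrt_or_eq_div_sub_sqrt (by positivity) hdisc.symm

/-- Two-bus power-flow model with fixed generator voltage magnitude `|Vg| = v > 0`.
The power-flow solution satisfies `W_P(Qn) ≥ 0`, and the net real power is one of the
two roots `Pn = (R·v² ± √(k_ZV·W_P(Qn)))/|Z|²`. -/
theorem net_real_power_roots
    (R X Vt v : ℝ) (hR : 0 < R) (hX : 0 < X) (hVt : 0 < Vt) (hv : 0 < v)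
    (Vg : ℂ) (hVg : ‖Vg‖ = v) :
    let Z : ℂ := ⟨R, X⟩
    let Icur : ℂ := (Vg - (Vt : ℂ)) / Z
    let Sn : ℂ := Vg * (starRingEnd ℂ) Icur
    let Pn : ℝ := Sn.re
    let Qn : ℝ := Sn.im
    let Zm : ℝ := ‖Z‖
    let WP : ℝ → ℝ := fun Q =>
      R ^ 2 / Zm ^ 4 - Q ^ 2 / v ^ 4 - (v ^ 2 - Vt ^ 2 - 2 * Q * X) / (Zm ^ 2 * v ^ 2)
    let kZV : ℝ := Zm ^ 4 * v ^ 4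
    0 ≤ WP Qn ∧
      (Pn = (R * v ^ 2 + Real.sqrt (kZV * WP Qn)) / Zm ^ 2 ∨
       Pn = (R * v ^ 2 - Real.sqrt (kZV * WP Qn)) / Zm ^ 2) :=
  net_real_power_roots_general R X Vt v hR hv Vg hVg
end

section
/- If the generator voltage magnitude is fixed at |V_g| = v > 0, then the power-flow solution satisfies W_Q(P_n) ≥ 0, and the net reactive power is one of the two roots Q_n = (X·v² + √(k_ZV·W_Q(P_n)))/|Z|² or Q_n = (X·v² − √(k_ZV·W_Q(P_n)))/|Z|². -/
/-!
Since `V_t` is real, `S_n · conj Z = |V_g|² - V_t V_g`, so `|v² - S_n · conj Z| = V_t v`.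
Expanded in `P_n` and `Q_n`, this circle equation is a quadratic in `Q_n` with leading
coefficient `|Z|²`, whose reduced discriminant is `k_ZV · W_Q(P_n)`.
-/

open Complex ComplexConjugate

theorem eq_add_sqrt_or_eq_sub_sqrt_of_quadratic_eq_zero {a b c q : ℝ} (ha : 0 < a)
    (h : a * q ^ 2 - 2 * b * q + c = 0) :
    0 ≤ b ^ 2 - a * c ∧
      (q = (b + √(b ^ 2 - a * c)) / a ∨ q = (b - √(b ^ 2 - a * c)) / a) := by
  have hdisc : b ^ 2 - a * c = (a * q - b) ^ 2 := by linear_combination (-a) * h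
  rw [hdisc, Real.sqrt_sq_eq_abs]
  refine ⟨sq_nonneg _, ?_⟩
  rcases abs_cases (a * q - b) with ⟨habs, _⟩ | ⟨habs, _⟩
  · left; rw [habs, eq_div_iff ha.ne']; ring
  · right; rw [habs, eq_div_iff ha.ne']; ring

theorem mul_conj_sub_ofReal_div_mul_conj {Vg Z : ℂ} {Vt : ℝ} (hZ : Z ≠ 0) :
    Vg * conj ((Vg - Vt) / Z) * conj Z = normSq Vg - Vt * Vg := by
  rw [map_div₀, mul_assoc, div_mul_cancel₀ _ ((map_ne_zero _).mpr hZ), map_sub, conj_ofReal,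
    mul_sub, mul_conj]
  ring

theorem quadratic_im_of_mul_conj_eq {S Vg Z : ℂ} {Vt : ℝ}
    (h : S * conj Z = normSq Vg - Vt * Vg) :
    normSq Z * S.im ^ 2 - 2 * (Z.im * normSq Vg) * S.im
      + (normSq Z * S.re ^ 2 - 2 * normSq Vg * Z.re * S.re + normSq Vg ^ 2
        - Vt ^ 2 * normSq Vg) = 0 := by
  have hre := congrArg Complex.re h
  have him := congrArg Complex.im h
  simp only [mul_re, mul_im, conj_re, conj_im, sub_re, sub_im, ofReal_re, ofReal_im] at hre him
  simp only [normSq_apply] at *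
  linear_combination
    (S.re * Z.re + S.im * Z.im - Vg.re * Vg.re - Vg.im * Vg.im - Vt * Vg.re) * hre
      + (S.im * Z.re - S.re * Z.im - Vt * Vg.im) * him

theorem net_reactive_power_roots_general
    (R X Vt v : ℝ) (hR : 0 < R) (hv : 0 < v)
    (Vg : ℂ) (hVg : ‖Vg‖ = v) :
    let Z : ℂ := ⟨R, X⟩
    let Icur : ℂ := (Vg - (Vt : ℂ)) / Z
    let Sn : ℂ := Vg * (starRingEnd ℂ) Icur
    let Pn : ℝ := Sn.re
    let Qn : ℝ := Sn.im
    let Zm : ℝ := ‖Z‖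
    let WQ : ℝ → ℝ := fun P =>
      X ^ 2 / Zm ^ 4 - P ^ 2 / v ^ 4 - (v ^ 2 - Vt ^ 2 - 2 * P * R) / (Zm ^ 2 * v ^ 2)
    let kZV : ℝ := Zm ^ 4 * v ^ 4
    0 ≤ WQ Pn ∧
      (Qn = (X * v ^ 2 + Real.sqrt (kZV * WQ Pn)) / Zm ^ 2 ∨
       Qn = (X * v ^ 2 - Real.sqrt (kZV * WQ Pn)) / Zm ^ 2) := by
  intro Z Icur Sn Pn Qn Zm WQ kZV
  have hZ : Z ≠ 0 := fun h => hR.ne' (congrArg Complex.re h)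
  have hZm : 0 < Zm := norm_pos_iff.mpr hZ
  have hVg2 : normSq Vg = v ^ 2 := by rw [← Complex.sq_norm, hVg]
  have hquad : Zm ^ 2 * Qn ^ 2 - 2 * (X * v ^ 2) * Qn
      + (Zm ^ 2 * Pn ^ 2 - 2 * v ^ 2 * R * Pn + (v ^ 2) ^ 2 - Vt ^ 2 * v ^ 2) = 0 := by
    rw [Complex.sq_norm, ← hVg2]
    exact quadratic_im_of_mul_conj_eq (mul_conj_sub_ofReal_div_mul_conj hZ)
  have hdisc : kZV * WQ Pn = (X * v ^ 2) ^ 2 - Zm ^ 2 * (Zm ^ 2 * Pn ^ 2 - 2 * v ^ 2 * R * Pn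
      + (v ^ 2) ^ 2 - Vt ^ 2 * v ^ 2) := by
    simp only [kZV, WQ]
    field_simp
    ring
  obtain ⟨hnonneg, hroots⟩ := eq_add_sqrt_or_eq_sub_sqrt_of_quadratic_eq_zero (by positivity) hquad
  rw [← hdisc] at hnonneg hroots
  exact ⟨nonneg_of_mul_nonneg_right hnonneg (by positivity), hroots⟩

/-- Two-bus power-flow model with fixed generator voltage magnitude `|Vg| = v > 0`.
The power-flow solution satisfies `W_Q(Pn) ≥ 0`, and the net reactive power is one of the
two roots `Qn = (X·v² ± √(k_ZV·W_Q(Pn)))/|Z|²`. -/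
theorem net_reactive_power_roots
    (R X Vt v : ℝ) (hR : 0 < R) (hX : 0 < X) (hVt : 0 < Vt) (hv : 0 < v)
    (Vg : ℂ) (hVg : ‖Vg‖ = v) :
    let Z : ℂ := ⟨R, X⟩
    let Icur : ℂ := (Vg - (Vt : ℂ)) / Z
    let Sn : ℂ := Vg * (starRingEnd ℂ) Icur
    let Pn : ℝ := Sn.re
    let Qn : ℝ := Sn.im
    let Zm : ℝ := ‖Z‖
    let WQ : ℝ → ℝ := fun P =>
      X ^ 2 / Zm ^ 4 - P ^ 2 / v ^ 4 - (v ^ 2 - Vt ^ 2 - 2 * P * R) / (Zm ^ 2 * v ^ 2)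
    let kZV : ℝ := Zm ^ 4 * v ^ 4
    0 ≤ WQ Pn ∧
      (Qn = (X * v ^ 2 + Real.sqrt (kZV * WQ Pn)) / Zm ^ 2 ∨
       Qn = (X * v ^ 2 - Real.sqrt (kZV * WQ Pn)) / Zm ^ 2) :=
  net_reactive_power_roots_general R X Vt v hR hv Vg hVg
end

section
/- When the generator voltage magnitude is held at the limit |V_g| = V_+ > 0, the transferred power P_t = P_n − P_l is an affine function of the net powers: P_t = ((X² − R²)·P_n − 2RX·Q_n)/|Z|² − R·(V_t² − V_+²)/|Z|². -/
/-!
Write Ohm's law as `V_g = V_t + Z I`. Then `S_n = V_t Ī + Z |I|²`, so subtracting the loss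
`R |I|²` leaves `P_t = Re (V_t Ī)`, the power arriving at the slack bus. Conjugating Ohm's law
gives `Z S̄_n = |V_g|² − V̄_g V_t`, which eliminates the unknown `V_g` from
`|Z|² V_t Ī = Z V_t (V̄_g − V̄_t)`; only `|V_g|` survives, and on the limit it equals `V₊`.
-/

open ComplexConjugate

namespace TwoBus

variable {Vg Vt Z I : ℂ}

theorem re_mul_conj_sub_loss (hOhm : Vg = Vt + Z * I) :
    (Vg * conj I).re - Z.re * ‖I‖ ^ 2 = (Vt * conj I).re := by
  have hS : Vg * conj I = Vt * conj I + Z * ((‖I‖ ^ 2 : ℝ) : ℂ) := by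
    rw [hOhm, add_mul, mul_assoc, Complex.mul_conj', Complex.ofReal_pow]
  rw [hS, Complex.add_re, Complex.re_mul_ofReal]
  ring

theorem sq_norm_mul_mul_conj (hOhm : Vg = Vt + Z * I) :
    ((‖Z‖ ^ 2 : ℝ) : ℂ) * (Vt * conj I) =
      Z * ((‖Vg‖ ^ 2 - ‖Vt‖ ^ 2 : ℝ) : ℂ) - Z ^ 2 * conj (Vg * conj I) := by
  subst hOhm
  simp only [Complex.ofReal_sub, Complex.ofReal_pow, ← Complex.mul_conj', map_add, map_mul,
    Complex.conj_conj]
  ring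

theorem re_sq_mul_conj (Z S : ℂ) :
    (Z ^ 2 * conj S).re = (Z.re ^ 2 - Z.im ^ 2) * S.re + 2 * Z.re * Z.im * S.im := by
  simp only [sq, Complex.mul_re, Complex.mul_im, Complex.conj_re, Complex.conj_im]
  ring

theorem sq_norm_mul_transferredPower (hOhm : Vg = Vt + Z * I) :
    ‖Z‖ ^ 2 * ((Vg * conj I).re - Z.re * ‖I‖ ^ 2) =
      Z.re * (‖Vg‖ ^ 2 - ‖Vt‖ ^ 2) -
        ((Z.re ^ 2 - Z.im ^ 2) * (Vg * conj I).re + 2 * Z.re * Z.im * (Vg * conj I).im) := by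
  have h := congrArg Complex.re (sq_norm_mul_mul_conj hOhm)
  rw [Complex.re_ofReal_mul, Complex.sub_re, Complex.re_mul_ofReal, re_sq_mul_conj] at h
  rw [re_mul_conj_sub_loss hOhm, h]

end TwoBus

theorem transferred_power_affine_on_voltage_limit_general
    (R X Vt Vplus : ℝ) (hR : 0 < R)
    (Vg : ℂ) (hVg : ‖Vg‖ = Vplus) :
    let Z : ℂ := ⟨R, X⟩
    let Icur : ℂ := (Vg - (Vt : ℂ)) / Z
    let Sn : ℂ := Vg * (starRingEnd ℂ) Icur
    let Pn : ℝ := Sn.re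
    let Qn : ℝ := Sn.im
    let Pl : ℝ := R * ‖Icur‖ ^ 2
    let Pt : ℝ := Pn - Pl
    let Zm : ℝ := ‖Z‖
    Pt = ((X ^ 2 - R ^ 2) * Pn - 2 * R * X * Qn) / Zm ^ 2
          - R * (Vt ^ 2 - Vplus ^ 2) / Zm ^ 2 := by
  intro Z Icur Sn Pn Qn Pl Pt Zm
  have hZ : Z ≠ 0 := fun h => hR.ne' (congrArg Complex.re h)
  have hOhm : Vg = Vt + Z * Icur := by rw [mul_div_cancel₀ _ hZ, add_sub_cancel]
  have hZm : Zm ^ 2 ≠ 0 := pow_ne_zero 2 (norm_ne_zero_iff.mpr hZ)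
  have key := TwoBus.sq_norm_mul_transferredPower hOhm
  rw [hVg, Complex.norm_real, Real.norm_eq_abs, sq_abs] at key
  rw [div_sub_div_same, eq_div_iff hZm]
  linarith

/-- Two-bus power-flow model with the generator voltage magnitude held at the limit
`|V_g| = V₊ > 0`. The transferred power `P_t = P_n − P_l` is an affine function of the
net powers: `P_t = ((X² − R²)·P_n − 2RX·Q_n)/|Z|² − R·(V_t² − V₊²)/|Z|²`. -/
theorem transferred_power_affine_on_voltage_limit
    (R X Vt Vplus : ℝ) (hR : 0 < R) (hX : 0 < X) (hVt : 0 < Vt) (hVplus : 0 < Vplus)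
    (Vg : ℂ) (hVg : ‖Vg‖ = Vplus) :
    let Z : ℂ := ⟨R, X⟩
    let Icur : ℂ := (Vg - (Vt : ℂ)) / Z
    let Sn : ℂ := Vg * (starRingEnd ℂ) Icur
    let Pn : ℝ := Sn.re
    let Qn : ℝ := Sn.im
    let Pl : ℝ := R * ‖Icur‖ ^ 2
    let Pt : ℝ := Pn - Pl
    let Zm : ℝ := ‖Z‖
    Pt = ((X ^ 2 - R ^ 2) * Pn - 2 * R * X * Qn) / Zm ^ 2
          - R * (Vt ^ 2 - Vplus ^ 2) / Zm ^ 2 :=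
  transferred_power_affine_on_voltage_limit_general R X Vt Vplus hR Vg hVg
end

section
/- For two power-flow states of the two-bus network that have the same generator voltage magnitude |V_g| = v, with net powers (P_n⁽¹⁾, Q_n⁽¹⁾) and (P_n⁽²⁾, Q_n⁽²⁾) and line losses P_l⁽¹⁾ and P_l⁽²⁾ respectively, the change in losses satisfies P_l⁽¹⁾ − P_l⁽²⁾ = (2R/|Z|²)·(R·(P_n⁽¹⁾ − P_n⁽²⁾) + X·(Q_n⁽¹⁾ − Q_n⁽²⁾)). -/
/-!
Multiplying the injected power `S = V · conj I` by `conj Z` removes the line: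
`conj Z · S = V · conj (V - V_t)`, whose real part is `R P + X Q`. On the other hand
`|Z|² |I|² = |V - V_t|² = 2 Re (V · conj (V - V_t)) - |V|² + |V_t|²`, so the loss is
`R |I|² = (R / |Z|²) (2 (R P + X Q) - |V|² + V_t²)`, and when `|V|` is the same in both states
the difference of losses is linear in `(R P + X Q)`.
-/

open ComplexConjugate

namespace Complex

lemma re_conj_mul (Z S : ℂ) : (conj Z * S).re = Z.re * S.re + Z.im * S.im := by
  simp only [mul_re, conj_re, conj_im]
  ring

lemma norm_sub_sq_eq (V W : ℂ) :
    ‖V - W‖ ^ 2 = 2 * (V * conj (V - W)).re - ‖V‖ ^ 2 + ‖W‖ ^ 2 := by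
  simp only [Complex.sq_norm, normSq_apply, mul_re, sub_re, sub_im, conj_re, conj_im]
  ring

lemma conj_mul_mul_conj_div {Z : ℂ} (hZ : Z ≠ 0) (V U : ℂ) :
    conj Z * (V * conj (U / Z)) = V * conj U := by
  rw [map_div₀]
  field_simp [(map_ne_zero conj).mpr hZ]

lemma norm_sub_div_sq_eq {Z : ℂ} (hZ : Z ≠ 0) (V W : ℂ) :
    ‖(V - W) / Z‖ ^ 2 =
      (2 * (conj Z * (V * conj ((V - W) / Z))).re - ‖V‖ ^ 2 + ‖W‖ ^ 2) / ‖Z‖ ^ 2 := by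
  rw [conj_mul_mul_conj_div hZ, norm_div, div_pow, norm_sub_sq_eq]

end Complex

theorem loss_difference_same_voltage_general
    (R X Vt v : ℝ) (hR : 0 < R)
    (Vg1 Vg2 : ℂ) (h1 : ‖Vg1‖ = v) (h2 : ‖Vg2‖ = v) :
    let Z : ℂ := ⟨R, X⟩
    let I1 : ℂ := (Vg1 - (Vt : ℂ)) / Z
    let I2 : ℂ := (Vg2 - (Vt : ℂ)) / Z
    let Sn1 : ℂ := Vg1 * (starRingEnd ℂ) I1
    let Sn2 : ℂ := Vg2 * (starRingEnd ℂ) I2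
    let Pl1 : ℝ := R * ‖I1‖ ^ 2
    let Pl2 : ℝ := R * ‖I2‖ ^ 2
    Pl1 - Pl2 = 2 * R / ‖Z‖ ^ 2 *
      (R * (Sn1.re - Sn2.re) + X * (Sn1.im - Sn2.im)) := by
  intro Z I1 I2 Sn1 Sn2 Pl1 Pl2
  have hZ : Z ≠ 0 := fun h => hR.ne' (congrArg Complex.re h)
  have hloss (V : ℂ) : R * ‖(V - Vt) / Z‖ ^ 2 = R / ‖Z‖ ^ 2 *
      (2 * (R * (V * conj ((V - Vt) / Z)).re + X * (V * conj ((V - Vt) / Z)).im)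
        - ‖V‖ ^ 2 + ‖(Vt : ℂ)‖ ^ 2) := by
    rw [Complex.norm_sub_div_sq_eq hZ, Complex.re_conj_mul]
    ring
  simp only [Pl1, Pl2, I1, I2, hloss, Sn1, Sn2, h1, h2]
  ring

/-- For two power-flow states of the two-bus network with the same generator voltage
magnitude `|V_g| = v`, the change in line losses satisfies
`P_l⁽¹⁾ − P_l⁽²⁾ = (2R/|Z|²)·(R·(P_n⁽¹⁾ − P_n⁽²⁾) + X·(Q_n⁽¹⁾ − Q_n⁽²⁾))`. -/
theorem loss_difference_same_voltage
    (R X Vt v : ℝ) (hR : 0 < R) (hX : 0 < X) (hVt : 0 < Vt) (hv : 0 < v)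
    (Vg1 Vg2 : ℂ) (h1 : ‖Vg1‖ = v) (h2 : ‖Vg2‖ = v) :
    let Z : ℂ := ⟨R, X⟩
    let I1 : ℂ := (Vg1 - (Vt : ℂ)) / Z
    let I2 : ℂ := (Vg2 - (Vt : ℂ)) / Z
    let Sn1 : ℂ := Vg1 * (starRingEnd ℂ) I1
    let Sn2 : ℂ := Vg2 * (starRingEnd ℂ) I2
    let Pl1 : ℝ := R * ‖I1‖ ^ 2
    let Pl2 : ℝ := R * ‖I2‖ ^ 2
    Pl1 - Pl2 = 2 * R / ‖Z‖ ^ 2 *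
      (R * (Sn1.re - Sn2.re) + X * (Sn1.im - Sn2.im)) :=
  loss_difference_same_voltage_general R X Vt v hR Vg1 Vg2 h1 h2
end

section
/- There exist network parameters R > 0, X > 0 and voltages 0 < V_t < V_+ with X·V_+ < V_t·|Z| for which the limiting valuation power error is strictly negative: k_nom = L/(k_PQ − L) < 0, where k_PQ = −X·V_+²/√(k_ZV·W_P(0)) and L = (2R/|Z|²)·(R·k_PQ + X). That is, ignoring losses can result in an underestimate of the value of reactive power. -/
/-- There exist network parameters `R > 0`, `X > 0` and voltages `0 < V_t < V₊` with
`X·V₊ < V_t·|Z|` for which the limiting valuation power error is strictly negative: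
`k_nom = L/(k_PQ − L) < 0`; i.e. ignoring losses can result in an underestimate of the
value of reactive power. -/
theorem exists_negative_limiting_valuation_error :
    ∃ R X Vt Vplus : ℝ, 0 < R ∧ 0 < X ∧ 0 < Vt ∧ Vt < Vplus ∧
      X * Vplus < Vt * Real.sqrt (R ^ 2 + X ^ 2) ∧
      (let Zm : ℝ := Real.sqrt (R ^ 2 + X ^ 2)
       let WP0 : ℝ :=
         R ^ 2 / Zm ^ 4 - (Vplus ^ 2 - Vt ^ 2) / (Zm ^ 2 * Vplus ^ 2)
       let kZV : ℝ := Zm ^ 4 * Vplus ^ 4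
       let kPQ : ℝ := -X * Vplus ^ 2 / Real.sqrt (kZV * WP0)
       let L : ℝ := 2 * R / Zm ^ 2 * (R * kPQ + X)
       L / (kPQ - L) < 0) := by
  refine ⟨4, 3, 123/200, 1, by norm_num, by norm_num, by norm_num, by norm_num, ?_, ?_⟩
  · have h5 : Real.sqrt ((4:ℝ) ^ 2 + 3 ^ 2) = 5 := by
      rw [show ((4:ℝ) ^ 2 + 3 ^ 2) = 5 ^ 2 by norm_num, Real.sqrt_sq (by norm_num)]
    rw [h5]; norm_num
  · have h5 : Real.sqrt ((4:ℝ) ^ 2 + 3 ^ 2) = 5 := by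
      rw [show ((4:ℝ) ^ 2 + 3 ^ 2) = 5 ^ 2 by norm_num, Real.sqrt_sq (by norm_num)]
    simp only [h5]
    have h2 : Real.sqrt ((5:ℝ) ^ 4 * (1:ℝ) ^ 4 *
        ((4:ℝ) ^ 2 / 5 ^ 4 - ((1:ℝ) ^ 2 - (123/200:ℝ) ^ 2) / (5 ^ 2 * 1 ^ 2))) = 27/40 := by
      rw [show ((5:ℝ) ^ 4 * (1:ℝ) ^ 4 *
        ((4:ℝ) ^ 2 / 5 ^ 4 - ((1:ℝ) ^ 2 - (123/200:ℝ) ^ 2) / (5 ^ 2 * 1 ^ 2))) = (27/40) ^ 2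
        by norm_num, Real.sqrt_sq (by norm_num)]
    rw [h2]
    norm_num
end
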